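/- Let φ : Y → X be a degree-n harmonic morphism of finite connected graphs, with X having more than one vertex. If φ is non-degenerate, then every spanning tree T of X lifts to a tree T̃ in Y: there is a subtree T̃ ⊆ Y mapped isomorphically onto T by φ, and T̃ may be chosen to contain any prescribed vertex y ∈ φ^{-1}(V(T)). -/

import Mathlib

/-!
Harmonicity and non-degeneracy give every vertex `y` of `Y` a positive local degree, so every
edge of `X` at `φ y` lifts to an edge at `y`. Starting from the one-vertex lift at `y`, a lift of
a subtree of `T` is grown one tree edge at a time, always along an edge of `T` leaving the
vertices covered so far (one exists because `T` connects `X`). Each step adds one vertex and one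
edge, so once every vertex is covered the lifted edges number `|V(X)| - 1 = |T|`: they are all
of `T`.
-/

open MulAction

/-- A finite multigraph without loop edges: an edge set with an incidence map
to unordered pairs of vertices, no edge being a loop. -/
structure Multigraph (V : Type*) (E : Type*) where
  ends : E → Sym2 V
  loopless : ∀ e, ¬ (ends e).IsDiag

namespace Multigraph

variable {V E : Type*}

/-- two vertices are joined by an edge -/
def Step (Γ : Multigraph V E) (a b : V) : Prop := ∃ e, Γ.ends e = s(a, b)

/-- graph-theoretic reachability (path-connectivity) -/
def Reach (Γ : Multigraph V E) : V → V → Prop := Relation.ReflTransGen Γ.Step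

/-- connectivity of a graph -/
def Connected (Γ : Multigraph V E) : Prop := ∀ a b : V, Γ.Reach a b

/-- reachability using only edges in a subset `T` -/
def ReachIn (Γ : Multigraph V E) (T : Set E) : V → V → Prop :=
  Relation.ReflTransGen (fun a b => ∃ e ∈ T, Γ.ends e = s(a, b))

/-- `T` is a spanning tree: it connects all vertices and has `|V| - 1` edges -/
def IsSpanningTree (Γ : Multigraph V E) (T : Set E) : Prop :=
  (∀ a b : V, Γ.ReachIn T a b) ∧ Nat.card T + 1 = Nat.card V

end Multigraph

open Multigraph

theorem Sym2.isDiag_map_iff' {α β : Type*} {f : α → β} (hf : Function.Injective f)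
    (z : Sym2 α) : (z.map f).IsDiag ↔ z.IsDiag := by
  induction z using Sym2.ind with
  | _ a b => simp [hf.eq_iff]

/-- A morphism of graphs: vertices map to vertices; an edge maps either to an
edge whose ends are the images of its ends, or (if the two ends have the same
image) it is vertical, collapsing to that image vertex. -/
structure GraphHom {VY EY VX EX : Type*} (ΓY : Multigraph VY EY)
    (ΓX : Multigraph VX EX) where
  fV : VY → VX
  fE : EY → EX ⊕ VX
  map_edge : ∀ e eX, fE e = Sum.inl eX → ΓX.ends eX = (ΓY.ends e).map fV
  map_vert : ∀ e v, fE e = Sum.inr v → (ΓY.ends e).map fV = Sym2.diag v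

/-- An isomorphism of multigraphs: bijections on vertices and edges preserving incidence. -/
structure GraphIso {V1 E1 V2 E2 : Type*} (Γ1 : Multigraph V1 E1)
    (Γ2 : Multigraph V2 E2) where
  vEquiv : V1 ≃ V2
  eEquiv : E1 ≃ E2
  map_ends : ∀ e, Γ2.ends (eEquiv e) = (Γ1.ends e).map vEquiv

/-- the morphism `φ` is harmonic: for every vertex `y`, the number of edges at `y`
lying over `e'` is independent of the edge `e'` incident to `φ(y)`. -/
def GraphHomHarmonic {VY EY VX EX : Type*} {ΓY : Multigraph VY EY}
    {ΓX : Multigraph VX EX} (f : GraphHom ΓY ΓX) : Prop :=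
  ∀ (y : VY) (e1 e2 : EX), f.fV y ∈ ΓX.ends e1 → f.fV y ∈ ΓX.ends e2 →
    Nat.card {e : EY // y ∈ ΓY.ends e ∧ f.fE e = Sum.inl e1} =
    Nat.card {e : EY // y ∈ ΓY.ends e ∧ f.fE e = Sum.inl e2}

/-- the morphism `φ` is degenerate at `y`: the whole neighborhood `y(1)` is
collapsed to the vertex `φ(y)`. -/
def DegenerateAt {VY EY VX EX : Type*} {ΓY : Multigraph VY EY}
    {ΓX : Multigraph VX EX} (f : GraphHom ΓY ΓX) (y : VY) : Prop :=
  ∀ e : EY, y ∈ ΓY.ends e → f.fE e = Sum.inr (f.fV y)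

section GroupAction

variable (G : Type*) [Group G] {V E : Type*} [MulAction G V] [MulAction G E]

/-- the `G`-actions on vertices and edges are compatible with the incidence structure -/
def ActsOn (Γ : Multigraph V E) : Prop :=
  ∀ (g : G) (e : E), Γ.ends (g • e) = (Γ.ends e).map (g • ·)

/-- the action is faithful: the stabilizer of each connected component acts
faithfully on that component -/
def FaithfulOnComponents (Γ : Multigraph V E) : Prop :=
  ∀ (v : V) (g : G), Γ.Reach v (g • v) →
    (∀ w, Γ.Reach v w → g • w = w) →
    (∀ e : E, (∀ u ∈ Γ.ends e, Γ.Reach v u) → g • e = e) → g = 1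

/-- harmonicity of the quotient morphism `φ_H : Y → H\Y`, expressed intrinsically:
for every vertex `y` and all non-vertical edge-orbits `H•e₁`, `H•e₂` incident to
the image vertex `H•y`, the numbers of edges at `y` lying over them agree. -/
def QuotHarmonic (Γ : Multigraph V E) (H : Subgroup G) : Prop :=
  ∀ (y : V) (e1 e2 : E),
    ¬ ((Γ.ends e1).map (Quotient.mk (orbitRel H V))).IsDiag →
    ¬ ((Γ.ends e2).map (Quotient.mk (orbitRel H V))).IsDiag →
    (∃ h : H, y ∈ Γ.ends (h • e1)) → (∃ h : H, y ∈ Γ.ends (h • e2)) →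
    Nat.card {e : E // e ∈ orbit H e1 ∧ y ∈ Γ.ends e} =
    Nat.card {e : E // e ∈ orbit H e2 ∧ y ∈ Γ.ends e}

/-- `(G,Y)` is a harmonic group action: for every subgroup `H ≤ G` the quotient
morphism `Y → H\Y` is harmonic. -/
def HarmonicAction (Γ : Multigraph V E) : Prop :=
  ∀ H : Subgroup G, QuotHarmonic G Γ H

/-- the criterion: each vertex stabilizer acts freely on the incident edges -/
def HarmonicCrit (Γ : Multigraph V E) : Prop :=
  ∀ (g : G) (v : V) (e : E), g • v = v → v ∈ Γ.ends e → g • e = e → g = 1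

end GroupAction

/-- A harmonic `G`-cover of `X`: a harmonic group action `(G,Y)` with `Y`
connected, together with a morphism `f : Y → X` realizing an isomorphism
`G\Y ≅ X`. -/
structure IsHarmonicGCover (G : Type*) [Group G] {VY EY VX EX : Type*}
    [MulAction G VY] [MulAction G EY] (ΓY : Multigraph VY EY)
    (ΓX : Multigraph VX EX) (f : GraphHom ΓY ΓX) : Prop where
  compat : ActsOn G ΓY
  harmonic : HarmonicCrit G ΓY
  connY : ΓY.Connected
  fV_equivariant : ∀ (g : G) (v : VY), f.fV (g • v) = f.fV v
  fE_equivariant : ∀ (g : G) (e : EY), f.fE (g • e) = f.fE e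
  fV_orbit : ∀ v w : VY, f.fV v = f.fV w → w ∈ orbit G v
  fE_orbit : ∀ (e e' : EY) (eX : EX), f.fE e = Sum.inl eX → f.fE e' = Sum.inl eX →
    e' ∈ orbit G e
  fV_surj : Function.Surjective f.fV
  fE_surj : ∀ eX : EX, ∃ e : EY, f.fE e = Sum.inl eX

/-- The decomposition group at `w`: elements of `G` stabilizing the connected
component of `w` inside the fiber over `f(w)`. -/
def Decomp (G : Type*) [Group G] {VY EY VX EX : Type*} [MulAction G VY]
    (ΓY : Multigraph VY EY) {ΓX : Multigraph VX EX} (f : GraphHom ΓY ΓX)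
    (w : VY) : Set G :=
  {g : G | Relation.ReflTransGen
    (fun a b => f.fV a = f.fV w ∧ f.fV b = f.fV w ∧ ∃ e, ΓY.ends e = s(a, b))
    w (g • w)}

section Cayley

variable {G : Type*} [Group G] {ι : Type*}

/-- identification of the two directed copies of a non-involution edge in a Cayley graph -/
def cayRel (s : ι → G) (inv : ι → ι) : G × ι → G × ι → Prop :=
  fun p q => s p.2 ≠ (s p.2)⁻¹ ∧ q = (p.1 * s p.2, inv p.2)

/-- the edge set of the Cayley graph `Cay(G,S)` -/
def CayE (s : ι → G) (inv : ι → ι) : Type _ := Quot (cayRel s inv)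

/-- the Cayley graph `Cay(G,S)` of a group `G` with respect to a symmetric multiset
`S`, presented as an indexed family `s : ι → G` together with an inversion pairing
`inv` on the index set.  For each `g` and `i` there is an edge from `g` to `g * s i`;
the edges for `(g, i)` and `(g * s i, inv i)` are identified when `s i` is not an
involution; involutions yield doubled edges. -/
def Cay (s : ι → G) (inv : ι → ι) (hinv : ∀ i, s (inv i) = (s i)⁻¹)
    (hne : ∀ i, s i ≠ 1) : Multigraph G (CayE s inv) where
  ends := Quot.lift (fun p => s(p.1, p.1 * s p.2)) (by
    rintro p q ⟨-, rfl⟩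
    dsimp only
    rw [hinv, mul_inv_cancel_right]
    exact Sym2.eq_swap)
  loopless := by
    intro e
    induction e using Quot.ind with
    | _ p =>
      show ¬ (s(p.1, p.1 * s p.2)).IsDiag
      simp only [Sym2.mk_isDiag_iff]
      intro h
      exact hne p.2 (mul_left_cancel (h.symm.trans (mul_one _).symm))

instance instCayAction (s : ι → G) (inv : ι → ι) : MulAction G (CayE s inv) where
  smul g := Quot.map (fun p => (g * p.1, p.2))
    (by rintro p q ⟨hi, rfl⟩; exact ⟨hi, by simp [mul_assoc]⟩)
  one_smul e := by
    induction e using Quot.ind with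
    | _ p =>
      show Quot.mk _ ((1 : G) * p.1, p.2) = Quot.mk _ p
      rw [one_mul]
  mul_smul g h e := by
    induction e using Quot.ind with
    | _ p =>
      show Quot.mk _ (g * h * p.1, p.2) = Quot.mk _ (g * (h * p.1), p.2)
      rw [mul_assoc]

end Cayley

theorem Multigraph.ReachIn.exists_crossing_edge {V E : Type*} {Γ : Multigraph V E} {T : Set E}
    {W : Set V} {a b : V} (h : Γ.ReachIn T a b) (ha : a ∈ W) (hb : b ∉ W) :
    ∃ e ∈ T, ∃ u ∈ W, ∃ v ∉ W, Γ.ends e = s(u, v) := by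
  induction h with
  | refl => exact absurd ha hb
  | @tail c d _ hcd ih =>
    by_cases hc : c ∈ W
    · obtain ⟨e, heT, he⟩ := hcd
      exact ⟨e, heT, c, hc, d, hb, he⟩
    · exact ih hc

section Lifting

variable {VY EY VX EX : Type*} {ΓY : Multigraph VY EY} {ΓX : Multigraph VX EX}
  {f : GraphHom ΓY ΓX}

theorem exists_nonvertical_of_not_degenerateAt {y : VY} (hy : ¬ DegenerateAt f y) :
    ∃ e eX, y ∈ ΓY.ends e ∧ f.fE e = Sum.inl eX := by
  simp only [DegenerateAt, not_forall] at hy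
  obtain ⟨e, hye, hne⟩ := hy
  rcases hfe : f.fE e with eX | v
  · exact ⟨e, eX, hye, hfe⟩
  · have hmem : f.fV y ∈ (ΓY.ends e).map f.fV := Sym2.mem_map.mpr ⟨y, hye, rfl⟩
    rw [f.map_vert e v hfe, Sym2.diag, Sym2.mem_iff, or_self] at hmem
    exact absurd (hmem ▸ hfe) hne

theorem GraphHomHarmonic.exists_edge_lift [Finite EY] (hharm : GraphHomHarmonic f) {y : VY}
    (hy : ¬ DegenerateAt f y) {eX : EX} (hmem : f.fV y ∈ ΓX.ends eX) :
    ∃ e, y ∈ ΓY.ends e ∧ f.fE e = Sum.inl eX := by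
  obtain ⟨e₀, eX₀, hye₀, hfe₀⟩ := exists_nonvertical_of_not_degenerateAt hy
  have hmem₀ : f.fV y ∈ ΓX.ends eX₀ := by
    rw [f.map_edge e₀ eX₀ hfe₀]
    exact Sym2.mem_map.mpr ⟨y, hye₀, rfl⟩
  have hpos : 0 < Nat.card {e : EY // y ∈ ΓY.ends e ∧ f.fE e = Sum.inl eX₀} :=
    Nat.card_pos_iff.mpr ⟨⟨⟨e₀, hye₀, hfe₀⟩⟩, inferInstance⟩
  rw [hharm y eX₀ eX hmem₀ hmem] at hpos
  obtain ⟨⟨e, he⟩⟩ := (Nat.card_pos_iff.mp hpos).1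
  exact ⟨e, he⟩

theorem GraphHomHarmonic.exists_edge_lift_of_ends_eq [Finite EY] (hharm : GraphHomHarmonic f)
    {y : VY} (hy : ¬ DegenerateAt f y) {eX : EX} {b : VX} (hends : ΓX.ends eX = s(f.fV y, b)) :
    ∃ e w, f.fE e = Sum.inl eX ∧ ΓY.ends e = s(y, w) ∧ f.fV w = b := by
  obtain ⟨e, hye, hfe⟩ := hharm.exists_edge_lift hy (by rw [hends]; exact Sym2.mem_mk_left _ _)
  obtain ⟨w, hw⟩ := Sym2.mem_iff_exists.mp hye
  have hmap := f.map_edge e eX hfe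
  rw [hends, hw, Sym2.map_mk, Sym2.congr_right] at hmap
  exact ⟨e, w, hfe, hw, hmap.symm⟩

variable (f) in
/-- A lift through `y` of the subtree of `T` with vertices `W` and edges `S`. The lifts of the
edges are only required to exist; they are chosen once the whole tree is lifted. -/
structure PartialTreeLift (T : Set EX) (y : VY) where
  W : Finset VX
  S : Finset EX
  sV : VX → VY
  base_mem : f.fV y ∈ W
  sV_base : sV (f.fV y) = y
  fV_sV : ∀ v ∈ W, f.fV (sV v) = v
  S_subset : ∀ e ∈ S, e ∈ T
  ends_subset : ∀ e ∈ S, ∀ v ∈ ΓX.ends e, v ∈ W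
  exists_lift : ∀ e ∈ S, ∃ e', f.fE e' = Sum.inl e ∧ ΓY.ends e' = (ΓX.ends e).map sV
  card_S : S.card + 1 = W.card

namespace PartialTreeLift

variable {T : Set EX} {y : VY}

def single (T : Set EX) (y : VY) : PartialTreeLift f T y where
  W := {f.fV y}
  S := ∅
  sV := fun _ => y
  base_mem := Finset.mem_singleton_self _
  sV_base := rfl
  fV_sV := fun _ hv => (Finset.mem_singleton.mp hv).symm
  S_subset := fun _ he => absurd he (Finset.notMem_empty _)
  ends_subset := fun _ he => absurd he (Finset.notMem_empty _)
  exists_lift := fun _ he => absurd he (Finset.notMem_empty _)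
  card_S := rfl

def extend [DecidableEq VX] [DecidableEq EX] (L : PartialTreeLift f T y) {eX : EX} (heX : eX ∈ T)
    {a b : VX} (ha : a ∈ L.W) (hb : b ∉ L.W) (hends : ΓX.ends eX = s(a, b)) {e : EY} {w : VY}
    (hfe : f.fE e = Sum.inl eX) (he : ΓY.ends e = s(L.sV a, w)) (hw : f.fV w = b) :
    PartialTreeLift f T y where
  W := insert b L.W
  S := insert eX L.S
  sV := Function.update L.sV b w
  base_mem := Finset.mem_insert_of_mem L.base_mem
  sV_base := by
    rw [Function.update_of_ne (ne_of_mem_of_not_mem L.base_mem hb), L.sV_base]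
  fV_sV v hv := by
    rcases Finset.mem_insert.mp hv with rfl | hv
    · rwa [Function.update_self]
    · rw [Function.update_of_ne (ne_of_mem_of_not_mem hv hb)]
      exact L.fV_sV v hv
  S_subset e' he' := by
    rcases Finset.mem_insert.mp he' with rfl | he'
    exacts [heX, L.S_subset e' he']
  ends_subset e' he' v hv := by
    rcases Finset.mem_insert.mp he' with rfl | he'
    · rw [hends, Sym2.mem_iff] at hv
      rcases hv with rfl | rfl
      exacts [Finset.mem_insert_of_mem ha, Finset.mem_insert_self _ _]
    · exact Finset.mem_insert_of_mem (L.ends_subset e' he' v hv)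
  exists_lift e' he' := by
    rcases Finset.mem_insert.mp he' with rfl | he'
    · refine ⟨e, hfe, ?_⟩
      rw [he, hends, Sym2.map_mk, Function.update_self,
        Function.update_of_ne (ne_of_mem_of_not_mem ha hb)]
    · obtain ⟨e'', hfe'', he''⟩ := L.exists_lift e' he'
      refine ⟨e'', hfe'', he''.trans (Sym2.map_congr fun v hv => ?_)⟩
      exact (Function.update_of_ne (ne_of_mem_of_not_mem (L.ends_subset e' he' v hv) hb) _ _).symm
  card_S := by
    have hnew : eX ∉ L.S :=
      fun h => hb (L.ends_subset eX h b (by rw [hends]; exact Sym2.mem_mk_right _ _))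
    rw [Finset.card_insert_of_notMem hnew, Finset.card_insert_of_notMem hb, L.card_S]

theorem exists_card_W_lt [DecidableEq VX] [DecidableEq EX] [Finite EY]
    (hharm : GraphHomHarmonic f) (hnondeg : ∀ y : VY, ¬ DegenerateAt f y)
    (hT : ∀ a b : VX, ΓX.ReachIn T a b) (L : PartialTreeLift f T y) {b : VX} (hb : b ∉ L.W) :
    ∃ L' : PartialTreeLift f T y, L.W.card < L'.W.card := by
  obtain ⟨eX, heX, a, ha, b', hb', hends⟩ :=
    (hT _ b).exists_crossing_edge (W := ↑L.W) L.base_mem hb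
  obtain ⟨e, w, hfe, he, hw⟩ :=
    hharm.exists_edge_lift_of_ends_eq (hnondeg (L.sV a)) (by rw [L.fV_sV a ha]; exact hends)
  refine ⟨L.extend heX ha hb' hends hfe he hw, ?_⟩
  simp only [extend, Finset.card_insert_of_notMem hb', Nat.lt_succ_self]

theorem exists_W_eq_univ [Fintype VX] [Finite EY] (hharm : GraphHomHarmonic f)
    (hnondeg : ∀ y : VY, ¬ DegenerateAt f y) (hT : ∀ a b : VX, ΓX.ReachIn T a b) (y : VY) :
    ∃ L : PartialTreeLift f T y, L.W = Finset.univ := by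
  classical
  suffices ∀ k ≤ Fintype.card VX, ∃ L : PartialTreeLift f T y, k ≤ L.W.card by
    obtain ⟨L, hL⟩ := this _ le_rfl
    exact ⟨L, Finset.eq_univ_of_card _ (le_antisymm (Finset.card_le_univ _) hL)⟩
  intro k hk
  induction k with
  | zero => exact ⟨single T y, Nat.zero_le _⟩
  | succ k ih =>
    obtain ⟨L, hL⟩ := ih (by omega)
    rcases Nat.lt_or_ge k L.W.card with hlt | hle
    · exact ⟨L, hlt⟩
    obtain ⟨b, -, hb⟩ := Finset.exists_mem_notMem_of_card_lt_card (s := L.W) (t := Finset.univ)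
      (by rw [Finset.card_univ]; omega)
    obtain ⟨L', hL'⟩ := exists_card_W_lt hharm hnondeg hT L hb
    exact ⟨L', by omega⟩

theorem coe_S_eq [Fintype VX] [Finite EX] (L : PartialTreeLift f T y) (hW : L.W = Finset.univ)
    (hcard : Nat.card T + 1 = Nat.card VX) : (L.S : Set EX) = T := by
  refine Set.eq_of_subset_of_ncard_le L.S_subset ?_ T.toFinite
  have := L.card_S
  rw [hW, Finset.card_univ, ← Nat.card_eq_fintype_card] at this
  rw [Set.ncard_coe_finset, ← Nat.card_coe_set_eq]
  omega

end PartialTreeLift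

end Lifting

theorem spanning_tree_lifts_general
    {VY EY VX EX : Type} [Fintype EY] [Fintype VX] [Fintype EX]
    (ΓY : Multigraph VY EY) (ΓX : Multigraph VX EX) (f : GraphHom ΓY ΓX)
    (hharm : GraphHomHarmonic f)
    (hnondeg : ∀ y : VY, ¬ DegenerateAt f y)
    (T : Set EX) (hT : ΓX.IsSpanningTree T) (y : VY) :
    ∃ (sV : VX → VY) (sE : ∀ e ∈ T, EY),
      (∀ v : VX, f.fV (sV v) = v) ∧
      (∀ (e : EX) (he : e ∈ T), f.fE (sE e he) = Sum.inl e) ∧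
      (∀ (e : EX) (he : e ∈ T), ΓY.ends (sE e he) = (ΓX.ends e).map sV) ∧
      sV (f.fV y) = y := by
  obtain ⟨L, hW⟩ := PartialTreeLift.exists_W_eq_univ hharm hnondeg hT.1 y
  have hS := L.coe_S_eq hW hT.2
  choose sE hsE using fun e (he : e ∈ T) => L.exists_lift e (by rwa [← hS] at he)
  exact ⟨L.sV, sE, fun v => L.fV_sV v (hW ▸ Finset.mem_univ v), fun e he => (hsE e he).1,
    fun e he => (hsE e he).2, L.sV_base⟩

/-- Let `φ : Y → X` be a degree-`n` harmonic morphism of finite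
connected graphs, with `X` having more than one vertex.  If `φ` is non-degenerate,
then every spanning tree `T` of `X` lifts to a tree in `Y`: there is a vertex
section `sV` of `φ` and a lift `sE` of the tree edges, mapping `T` isomorphically
onto a subtree of `Y`, and the lift may be chosen through any prescribed vertex
`y` of `Y`. -/
theorem spanning_tree_lifts
    {VY EY VX EX : Type} [Fintype VY] [Fintype EY] [Fintype VX] [Fintype EX]
    (ΓY : Multigraph VY EY) (ΓX : Multigraph VX EX) (f : GraphHom ΓY ΓX)
    (hharm : GraphHomHarmonic f) (n : ℕ)
    (hdeg : ∀ eX : EX, Nat.card {e : EY // f.fE e = Sum.inl eX} = n)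
    (hYconn : ΓY.Connected) (hXconn : ΓX.Connected)
    (hX2 : ∃ a b : VX, a ≠ b)
    (hnondeg : ∀ y : VY, ¬ DegenerateAt f y)
    (T : Set EX) (hT : ΓX.IsSpanningTree T) (y : VY) :
    ∃ (sV : VX → VY) (sE : ∀ e ∈ T, EY),
      (∀ v : VX, f.fV (sV v) = v) ∧
      (∀ (e : EX) (he : e ∈ T), f.fE (sE e he) = Sum.inl e) ∧
      (∀ (e : EX) (he : e ∈ T), ΓY.ends (sE e he) = (ΓX.ends e).map sV) ∧
      sV (f.fV y) = y :=
  spanning_tree_lifts_general ΓY ΓX f hharm hnondeg T hT y
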